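/- arXiv:1404.6917 — 3 statements merged into one kernel-verified Lean document; each statement's English description precedes it below -/
import Mathlib

section
/- Suppose p = q, p̂ᵢ = ẑᵢ for all i with the p̂ᵢ pairwise distinct, Σᵢ b̂ᵢ = 1, with Σᵢ b̂ᵢ/(1 − p̂ᵢt) not identically zero. If the coefficients âᵢ, b̂ᵢ satisfy Σᵢ âᵢ p̂ᵢᵏ − Σᵢ b̂ᵢ Σ_{j=0}^{k−1} c_j p̂ᵢ^{k−j} = c_k for k = 0, ..., 2p, then R(t) = (Σᵢ âᵢ/(1 − p̂ᵢt))/(Σᵢ b̂ᵢ/(1 − p̂ᵢt)) is a rational function with numerator and denominator of degree at most p whose power series expansion agrees with f = Σ cᵢtⁱ through order 2p; hence R equals the Padé approximant [p/p]_f. -/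
/-!
Expanding `1/(1 - p̂ᵢt)` geometrically, the `k`-th coefficient of `Σᵢ wᵢ/(1 - p̂ᵢt)` is
`Σᵢ wᵢ p̂ᵢᵏ`, so, given `Σᵢ b̂ᵢ = 1`, the accuracy system says exactly that
`A - B f = O(t^{2p+1})` for the two barycentric sums `A`, `B`. As `B(0) = 1`, also
`A/B - f = (A - B f)/B = O(t^{2p+1})`. Multiplying `A` and `B` by `∏ᵢ (1 - p̂ᵢt)`, which has
constant term `1`, turns both into polynomials of degree `≤ p` without changing `A/B`.
-/

open Finset Polynomial

namespace PowerSeries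

variable {K : Type*} [Field K]

theorem inv_one_sub_C_mul_X (a : K) : (1 - C a * X : K⟦X⟧)⁻¹ = mk (a ^ ·) := by
  rw [inv_eq_iff_mul_eq_one (by simp)]
  simpa [rescale_mk, rescale_X] using congrArg (rescale a) (mk_one_mul_one_sub_eq_one K)

theorem dvd_mul_inv_sub_of_dvd_sub_mul {a b f d : K⟦X⟧} (hb : constantCoeff b ≠ 0)
    (h : d ∣ a - b * f) : d ∣ a * b⁻¹ - f := by
  have : a * b⁻¹ - f = (a - b * f) * b⁻¹ := by
    linear_combination f * PowerSeries.mul_inv_cancel b hb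
  exact this ▸ dvd_mul_of_dvd_left h _

theorem mul_mul_inv_mul_cancel_right {a b q : K⟦X⟧} (hq : constantCoeff q ≠ 0) :
    a * q * (b * q)⁻¹ = a * b⁻¹ := by
  rw [PowerSeries.mul_inv_rev]
  linear_combination (a * b⁻¹) * PowerSeries.mul_inv_cancel q hq

end PowerSeries

section Barycentric

variable {K ι : Type*} [Field K] (s : Finset ι) (w x : ι → K)

noncomputable def barycentricSum : PowerSeries K :=
  ∑ i ∈ s, PowerSeries.C (w i) * (1 - PowerSeries.C (x i) * PowerSeries.X)⁻¹

noncomputable def nodePoly : K[X] := ∏ i ∈ s, (1 - C (x i) * X)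

noncomputable def barycentricNumerator [DecidableEq ι] : K[X] :=
  ∑ i ∈ s, C (w i) * nodePoly (s.erase i) x

theorem coeff_barycentricSum (k : ℕ) :
    PowerSeries.coeff k (barycentricSum s w x) = ∑ i ∈ s, w i * x i ^ k := by
  simp [barycentricSum, PowerSeries.inv_one_sub_C_mul_X]

theorem coeff_barycentricSum_mul_mk (c : ℕ → K) (m : ℕ) :
    PowerSeries.coeff m (barycentricSum s w x * PowerSeries.mk c) =
      ∑ i ∈ s, w i * ∑ j ∈ range m, c j * x i ^ (m - j) + c m * ∑ i ∈ s, w i := by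
  rw [mul_comm, PowerSeries.coeff_mul, Nat.sum_antidiagonal_eq_sum_range_succ_mk, sum_range_succ]
  simp only [PowerSeries.coeff_mk, coeff_barycentricSum, Nat.sub_self, pow_zero, mul_one, mul_sum]
  rw [sum_comm]
  congr 1
  exact sum_congr rfl fun i _ => sum_congr rfl fun j _ => by ring

theorem coe_nodePoly : (nodePoly s x : PowerSeries K) =
    ∏ i ∈ s, (1 - PowerSeries.C (x i) * PowerSeries.X) := by
  rw [nodePoly, ← coeToPowerSeries.ringHom_apply, map_prod]
  simp

theorem constantCoeff_nodePoly :
    PowerSeries.constantCoeff (nodePoly s x : PowerSeries K) = 1 := by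
  simp [coe_nodePoly]

theorem natDegree_nodePoly_le : (nodePoly s x).natDegree ≤ #s := by
  refine (natDegree_prod_le _ _).trans ((sum_le_card_nsmul s _ 1 fun i _ => ?_).trans (by simp))
  compute_degree

theorem natDegree_barycentricNumerator_le [DecidableEq ι] :
    (barycentricNumerator s w x).natDegree ≤ #s - 1 := by
  refine natDegree_sum_le_of_forall_le _ _ fun i hi => ?_
  refine (natDegree_C_mul_le _ _).trans ?_
  simpa [card_erase_of_mem hi] using natDegree_nodePoly_le (s.erase i) x

theorem coeff_zero_barycentricNumerator [DecidableEq ι] :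
    (barycentricNumerator s w x).coeff 0 = ∑ i ∈ s, w i := by
  simp [barycentricNumerator, coeff_zero_eq_eval_zero, eval_finsetSum, nodePoly, eval_prod]

theorem barycentricSum_mul_nodePoly [DecidableEq ι] :
    barycentricSum s w x * nodePoly s x = (barycentricNumerator s w x : PowerSeries K) := by
  rw [barycentricSum, barycentricNumerator, sum_mul,
    ← coeToPowerSeries.ringHom_apply (φ := ∑ i ∈ s, _), map_sum]
  refine sum_congr rfl fun i hi => ?_
  rw [coe_nodePoly, ← mul_prod_erase s _ hi, map_mul, coeToPowerSeries.ringHom_apply,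
    coeToPowerSeries.ringHom_apply, coe_C, coe_nodePoly, mul_assoc, ← mul_assoc _⁻¹,
    PowerSeries.inv_mul_cancel _ (by simp), one_mul]

end Barycentric

theorem barycentric_is_pade_diag_general
    (K : Type*) [Field K] (p : ℕ) (c : ℕ → K) (ah bh ph : ℕ → K)
    (hnorm : ∑ i ∈ Finset.range (p + 1), bh i = 1)
    (hsys : ∀ k ≤ 2 * p,
      ∑ i ∈ Finset.range (p + 1), ah i * ph i ^ k -
        ∑ i ∈ Finset.range (p + 1), bh i * ∑ j ∈ Finset.range k, c j * ph i ^ (k - j) = c k) :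
    ∃ N D : Polynomial K, N.natDegree ≤ p ∧ D.natDegree ≤ p ∧ D.coeff 0 ≠ 0 ∧
      (∑ i ∈ Finset.range (p + 1),
          PowerSeries.C (ah i) * (1 - PowerSeries.C (ph i) * PowerSeries.X)⁻¹) *
        (∑ i ∈ Finset.range (p + 1),
          PowerSeries.C (bh i) * (1 - PowerSeries.C (ph i) * PowerSeries.X)⁻¹)⁻¹ =
        (N : PowerSeries K) * (D : PowerSeries K)⁻¹ ∧
      ∀ k ≤ 2 * p,
        PowerSeries.coeff k ((N : PowerSeries K) * (D : PowerSeries K)⁻¹) = c k := by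
  set s := range (p + 1)
  set A := barycentricSum s ah ph
  set B := barycentricSum s bh ph
  have hratio : A * B⁻¹ =
      barycentricNumerator s ah ph * (barycentricNumerator s bh ph : PowerSeries K)⁻¹ := by
    rw [← barycentricSum_mul_nodePoly, ← barycentricSum_mul_nodePoly,
      PowerSeries.mul_mul_inv_mul_cancel_right (by rw [constantCoeff_nodePoly]; exact one_ne_zero)]
  have hB : PowerSeries.constantCoeff B ≠ 0 := by
    simp [B, ← PowerSeries.coeff_zero_eq_constantCoeff_apply, coeff_barycentricSum, hnorm]
  have hmatch : PowerSeries.X ^ (2 * p + 1) ∣ A - B * PowerSeries.mk c := by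
    refine PowerSeries.X_pow_dvd_iff.2 fun m hm => ?_
    rw [map_sub, coeff_barycentricSum, coeff_barycentricSum_mul_mk, hnorm]
    linear_combination hsys m (by omega)
  have hcard : #s - 1 = p := by simp [s]
  refine ⟨_, _, hcard ▸ natDegree_barycentricNumerator_le s ah ph,
    hcard ▸ natDegree_barycentricNumerator_le s bh ph,
    by simp [coeff_zero_barycentricNumerator, hnorm], hratio, fun k hk => ?_⟩
  have := PowerSeries.X_pow_dvd_iff.1 (PowerSeries.dvd_mul_inv_sub_of_dvd_sub_mul hB hmatch) k
    (by omega)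
  rwa [hratio, map_sub, PowerSeries.coeff_mk, sub_eq_zero] at this

/-- When `p = q` and all poles equal all zeros (`p̂ᵢ = ẑᵢ`, pairwise distinct), the barycentric
rational function whose coefficients satisfy the accuracy system through order `2p` is a ratio
of two polynomials of degree at most `p` matching `f` through order `2p`, i.e. it is the Padé
approximant `[p/p]_f`. -/
theorem barycentric_is_pade_diag
    (K : Type*) [Field K] (p : ℕ) (c : ℕ → K) (ah bh ph : ℕ → K)
    (hdist : ∀ i ≤ p, ∀ j ≤ p, i ≠ j → ph i ≠ ph j)
    (hnorm : ∑ i ∈ Finset.range (p + 1), bh i = 1)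
    (hden : (∑ i ∈ Finset.range (p + 1),
        PowerSeries.C (bh i) * (1 - PowerSeries.C (ph i) * PowerSeries.X)⁻¹ :
        PowerSeries K) ≠ 0)
    (hsys : ∀ k ≤ 2 * p,
      ∑ i ∈ Finset.range (p + 1), ah i * ph i ^ k -
        ∑ i ∈ Finset.range (p + 1), bh i * ∑ j ∈ Finset.range k, c j * ph i ^ (k - j) = c k) :
    ∃ N D : Polynomial K, N.natDegree ≤ p ∧ D.natDegree ≤ p ∧ D.coeff 0 ≠ 0 ∧
      (∑ i ∈ Finset.range (p + 1),
          PowerSeries.C (ah i) * (1 - PowerSeries.C (ph i) * PowerSeries.X)⁻¹) *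
        (∑ i ∈ Finset.range (p + 1),
          PowerSeries.C (bh i) * (1 - PowerSeries.C (ph i) * PowerSeries.X)⁻¹)⁻¹ =
        (N : PowerSeries K) * (D : PowerSeries K)⁻¹ ∧
      ∀ k ≤ 2 * p,
        PowerSeries.coeff k ((N : PowerSeries K) * (D : PowerSeries K)⁻¹) = c k :=
  barycentric_is_pade_diag_general K p c ah bh ph hnorm hsys
end

section
/- Let f(t) = c₀ + c₁t + ⋯ ∈ K[[t]] and define f^{−n}(t) = tⁿ f(t). If R_{p+n,p+n} is a rational function with numerator and denominator degrees at most p+n, denominator nonzero at 0, whose expansion agrees with f^{−n} through order 2(p+n), then the numerator of R_{p+n,p+n} is divisible by tⁿ, and R(t) := t^{−n} R_{p+n,p+n}(t) is a rational function with numerator degree at most p and denominator degree at most p+n whose expansion agrees with f through order n+2p. -/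
/-!
The first `n` coefficients of `N/D` agree with those of `tⁿ f`, hence vanish, so `tⁿ` divides
`N/D` in `K⟦t⟧` and therefore also `N = (N/D)·D`. Writing `N = tⁿ M`, the degree of `M` is that
of `N` minus `n`, and the coefficient of `t^(k+n)` in `tⁿ M/D` is the coefficient of `tᵏ` in
`M/D`; so agreement through order `2(p+n)` becomes agreement through order `2(p+n) - n = n + 2p`.
-/

open Polynomial

namespace Polynomial

theorem X_pow_dvd_iff_coe_dvd {R : Type*} [CommSemiring R] {N : R[X]} {n : ℕ} :
    X ^ n ∣ N ↔ PowerSeries.X ^ n ∣ (N : PowerSeries R) := by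
  simp only [X_pow_dvd_iff, PowerSeries.X_pow_dvd_iff, coeff_coe]

theorem natDegree_le_of_natDegree_X_pow_mul_le {R : Type*} [Semiring R] {M : R[X]} {n d : ℕ}
    (h : (X ^ n * M).natDegree ≤ d + n) : M.natDegree ≤ d := by
  nontriviality R
  rcases eq_or_ne M 0 with rfl | hM
  · simp
  · rw [natDegree_X_pow_mul n hM] at h
    omega

end Polynomial

theorem pade_shift_down_general
    (K : Type*) [Field K] (c : ℕ → K) (n p : ℕ) (N D : Polynomial K)
    (hN : N.natDegree ≤ p + n) (hD0 : D.coeff 0 ≠ 0)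
    (happrox : ∀ k ≤ 2 * (p + n),
      PowerSeries.coeff k ((N : PowerSeries K) * (D : PowerSeries K)⁻¹) =
        PowerSeries.coeff k (PowerSeries.X ^ n * PowerSeries.mk c)) :
    Polynomial.X ^ n ∣ N ∧
      ∃ M : Polynomial K, N = Polynomial.X ^ n * M ∧ M.natDegree ≤ p ∧
        ∀ k ≤ n + 2 * p,
          PowerSeries.coeff k ((M : PowerSeries K) * (D : PowerSeries K)⁻¹) = c k := by
  have hD_unit : PowerSeries.constantCoeff (D : PowerSeries K) ≠ 0 := by
    rwa [constantCoeff_coe]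
  have h_ratio : PowerSeries.X ^ n ∣ (N : PowerSeries K) * (D : PowerSeries K)⁻¹ :=
    PowerSeries.X_pow_dvd_iff.2 fun m hm => by
      rw [happrox m (by omega), PowerSeries.coeff_X_pow_mul', if_neg (by omega)]
  have h_num : X ^ n ∣ N := X_pow_dvd_iff_coe_dvd.2 <| by
    simpa only [mul_assoc, PowerSeries.inv_mul_cancel _ hD_unit, mul_one] using
      dvd_mul_of_dvd_left h_ratio (D : PowerSeries K)
  obtain ⟨M, rfl⟩ := h_num
  refine ⟨dvd_mul_right _ _, M, rfl, natDegree_le_of_natDegree_X_pow_mul_le hN, fun k hk => ?_⟩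
  have h_shift := happrox (k + n) (by omega)
  rwa [coe_mul, coe_pow, coe_X, mul_assoc, PowerSeries.coeff_X_pow_mul,
    PowerSeries.coeff_X_pow_mul, PowerSeries.coeff_mk] at h_shift

/-- If `R_{p+n,p+n} = N/D` (degrees ≤ p+n, `D(0) ≠ 0`) matches `f^{−n}(t) = tⁿ f(t)` through
order `2(p+n)`, then `tⁿ` divides the numerator `N`, and `t^{−n} R_{p+n,p+n}` is a rational
function with numerator degree ≤ p and denominator degree ≤ p+n matching `f` through order
`n + 2p`. -/
theorem pade_shift_down
    (K : Type*) [Field K] (c : ℕ → K) (n p : ℕ) (N D : Polynomial K)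
    (hN : N.natDegree ≤ p + n) (hD : D.natDegree ≤ p + n) (hD0 : D.coeff 0 ≠ 0)
    (happrox : ∀ k ≤ 2 * (p + n),
      PowerSeries.coeff k ((N : PowerSeries K) * (D : PowerSeries K)⁻¹) =
        PowerSeries.coeff k (PowerSeries.X ^ n * PowerSeries.mk c)) :
    Polynomial.X ^ n ∣ N ∧
      ∃ M : Polynomial K, N = Polynomial.X ^ n * M ∧ M.natDegree ≤ p ∧
        ∀ k ≤ n + 2 * p,
          PowerSeries.coeff k ((M : PowerSeries K) * (D : PowerSeries K)⁻¹) = c k :=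
  pade_shift_down_general K c n p N D hN hD0 happrox
end

section
/- Let f = Σ cₖtᵏ ∈ K[[t]] and let p̃ᵢ (i = 0,...,p) and z̃ᵢ (i = 0,...,q) be nonzero scalars with all p̃ᵢ distinct and all z̃ᵢ distinct. Suppose ãᵢ, b̃ᵢ satisfy Σᵢ b̃ᵢ/z̃ᵢ = 1 and Σᵢ ãᵢ/p̃ᵢ^{k+1} − Σᵢ b̃ᵢ Σ_{j=0}^{k−1} c_j/z̃ᵢ^{k−j+1} = c_k for k = 0,...,p+q. Then the power series expansion of R̃(t) = (Σᵢ ãᵢ/(p̃ᵢ − t))/(Σᵢ b̃ᵢ/(z̃ᵢ − t)) agrees with f through order p+q. -/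
/-!
Write `A` and `N` for the power series of the numerator `∑ ãᵢ/(p̃ᵢ − t)` and the denominator
`∑ b̃ᵢ/(z̃ᵢ − t)`; their coefficients of `tᵏ` are `∑ ãᵢ/p̃ᵢ^{k+1}` and `∑ b̃ᵢ/z̃ᵢ^{k+1}`.
Splitting off the term `j = k`, which is `c_k` by the normalization, the linear system says
exactly that `A` and `f·N` agree through order `p + q`. Hence `t^{p+q+1}` divides `A − f·N`,
and therefore also `A/N − f = (A − f·N)/N`, because `N` has constant term `1`.
-/

open Finset PowerSeries

theorem coeff_inv_C_sub_X {K : Type*} [Field K] (a : K) (k : ℕ) :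
    coeff k (C a - X)⁻¹ = (a ^ (k + 1))⁻¹ := by
  rcases eq_or_ne a 0 with rfl | ha
  -- both sides are junk zeros: `(-X)⁻¹ = 0` because its constant coefficient vanishes
  · simp [PowerSeries.inv_eq_zero.mpr]
  · have hinv : (C a - X)⁻¹ = invUnitsSub (Units.mk0 a ha) :=
      (PowerSeries.inv_eq_iff_mul_eq_one (by simpa using ha)).mpr (invUnitsSub_mul_sub _)
    simp [hinv, coeff_invUnitsSub]

theorem coeff_sum_C_mul_inv_C_sub_X {K ι : Type*} [Field K] (s : Finset ι) (b z : ι → K) (k : ℕ) :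
    coeff k (∑ i ∈ s, C (b i) * (C (z i) - X)⁻¹) = ∑ i ∈ s, b i / z i ^ (k + 1) := by
  simp [coeff_C_mul, coeff_inv_C_sub_X, div_eq_mul_inv]

theorem coeff_mk_mul_C_mul_inv_C_sub_X {K : Type*} [Field K] (c : ℕ → K) (b z : K) (k : ℕ) :
    coeff k (mk c * (C b * (C z - X)⁻¹)) = b * ∑ j ∈ range (k + 1), c j / z ^ (k - j + 1) := by
  rw [coeff_mul, Nat.sum_antidiagonal_eq_sum_range_succ_mk, mul_sum]
  refine sum_congr rfl fun j _ => ?_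
  rw [coeff_mk, coeff_C_mul, coeff_inv_C_sub_X]
  ring

theorem coeff_mul_inv_eq_of_coeff_eq_coeff_mul {K : Type*} [Field K] {A N g : K⟦X⟧} {m : ℕ}
    (hN : constantCoeff N ≠ 0) (h : ∀ k ≤ m, coeff k A = coeff k (g * N)) :
    ∀ k ≤ m, coeff k (A * N⁻¹) = coeff k g := by
  have hdvd : X ^ (m + 1) ∣ A - g * N :=
    X_pow_dvd_iff.mpr fun k hk => by rw [map_sub, h k (by omega), sub_self]
  have hdiff : A * N⁻¹ - g = (A - g * N) * N⁻¹ := by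
    rw [sub_mul, mul_assoc, PowerSeries.mul_inv_cancel _ hN, mul_one]
  intro k hk
  rw [← sub_eq_zero, ← map_sub, hdiff]
  exact X_pow_dvd_iff.mp (dvd_mul_of_dvd_left hdvd _) k (by omega)

theorem barycentric_form1_accuracy_general
    (K : Type*) [Field K] (p q : ℕ) (c at' bt pt zt : ℕ → K)
    (hnorm : ∑ i ∈ Finset.range (q + 1), bt i / zt i = 1)
    (hsys : ∀ k ≤ p + q,
      ∑ i ∈ Finset.range (p + 1), at' i / pt i ^ (k + 1) -
        ∑ i ∈ Finset.range (q + 1),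
          bt i * ∑ j ∈ Finset.range k, c j / zt i ^ (k - j + 1) = c k) :
    ∀ k ≤ p + q,
      PowerSeries.coeff (R := K) k
        ((∑ i ∈ Finset.range (p + 1),
            PowerSeries.C (R := K) (at' i) * (PowerSeries.C (R := K) (pt i) - PowerSeries.X)⁻¹) *
          (∑ i ∈ Finset.range (q + 1),
            PowerSeries.C (R := K) (bt i) * (PowerSeries.C (R := K) (zt i) - PowerSeries.X)⁻¹)⁻¹) = c k := by
  intro k hk
  rw [← coeff_mk k c]
  refine coeff_mul_inv_eq_of_coeff_eq_coeff_mul ?_ (fun n hn => ?_) k hk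
  · rw [← coeff_zero_eq_constantCoeff_apply, coeff_sum_C_mul_inv_C_sub_X]
    simp [hnorm]
  · have hlast : ∑ i ∈ range (q + 1), bt i * (c n / zt i ^ (n - n + 1)) = c n :=
      calc _ = c n * ∑ i ∈ range (q + 1), bt i / zt i := by
            rw [mul_sum]
            exact sum_congr rfl fun i _ => by rw [Nat.sub_self, zero_add, pow_one]; ring
        _ = c n := by rw [hnorm, mul_one]
    rw [coeff_sum_C_mul_inv_C_sub_X, mul_sum, map_sum]
    simp only [coeff_mk_mul_C_mul_inv_C_sub_X, sum_range_succ _ n, mul_add, sum_add_distrib, hlast]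
    linear_combination hsys n hn

/-- Form 1 accuracy: if the coefficients `ãᵢ, b̃ᵢ` satisfy the normalization
`∑ b̃ᵢ/z̃ᵢ = 1` and the linear system
`∑ᵢ ãᵢ/p̃ᵢ^{k+1} − ∑ᵢ b̃ᵢ ∑_{j<k} c_j/z̃ᵢ^{k−j+1} = c_k` for `k = 0,…,p+q`, then the
power series expansion of `R̃ = (∑ ãᵢ/(p̃ᵢ − t))/(∑ b̃ᵢ/(z̃ᵢ − t))` agrees with
`f = ∑ c_k t^k` through order `p + q`. -/
theorem barycentric_form1_accuracy
    (K : Type*) [Field K] (p q : ℕ) (c at' bt pt zt : ℕ → K)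
    (hptne : ∀ i ≤ p, pt i ≠ 0) (hztne : ∀ i ≤ q, zt i ≠ 0)
    (hptd : ∀ i ≤ p, ∀ j ≤ p, i ≠ j → pt i ≠ pt j)
    (hztd : ∀ i ≤ q, ∀ j ≤ q, i ≠ j → zt i ≠ zt j)
    (hnorm : ∑ i ∈ Finset.range (q + 1), bt i / zt i = 1)
    (hsys : ∀ k ≤ p + q,
      ∑ i ∈ Finset.range (p + 1), at' i / pt i ^ (k + 1) -
        ∑ i ∈ Finset.range (q + 1),
          bt i * ∑ j ∈ Finset.range k, c j / zt i ^ (k - j + 1) = c k) :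
    ∀ k ≤ p + q,
      PowerSeries.coeff (R := K) k
        ((∑ i ∈ Finset.range (p + 1),
            PowerSeries.C (R := K) (at' i) * (PowerSeries.C (R := K) (pt i) - PowerSeries.X)⁻¹) *
          (∑ i ∈ Finset.range (q + 1),
            PowerSeries.C (R := K) (bt i) * (PowerSeries.C (R := K) (zt i) - PowerSeries.X)⁻¹)⁻¹) = c k :=
  barycentric_form1_accuracy_general K p q c at' bt pt zt hnorm hsys
end
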